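/- Let n, d ∈ ℕ with n ≥ 2 and d ≥ 2 satisfy (n+1)/(n−1) > d/2. Then for every γ ∈ (−∞, d/2 + min(d−2, 1) + n(1 − d/2)) one has sup_{k ∈ ℤ^d} Σ_{l₁,…,l_n ∈ ℤ^d with l₁+⋯+l_n = k} (λ_k)^γ / ( (λ_{l₁})^{1 + min(d−2,1)/n} ⋯ (λ_{l_n})^{1 + min(d−2,1)/n} ) < ∞. -/

import Mathlib

/-!
Split the fibre sum according to a summand `l_j` of largest `λ`. Then `λ_k ≤ n² λ_{l_j}`, so for
`γ ≥ 0` the numerator `λ_k^γ` is absorbed by `λ_{l_j}^α`; since every other `λ_{l_i}` is at most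
`λ_{l_j}`, the surplus exponent can be moved onto the other summands, which then carry
`λ_{l_i}^{-β}` with `β > d/2` as long as `γ < nα - (n-1)d/2`. As `l_j` is determined by the other
`n - 1` summands, the fibre sum is at most `n (∑_{x ∈ ℤ^d} λ_x^{-β})^{n-1}`, uniformly in `k`.
The hypothesis `(n+1)/(n-1) > d/2` makes the threshold `nα - (n-1)d/2` positive, so negative `γ`
reduce to `γ = 0` via `λ_k ≥ 1`.
-/

open scoped ENNReal

/-- `λ_x = 1 + x₁² + ⋯ + x_d²` for a lattice point `x ∈ ℤ^d`. -/
noncomputable def lam {d : ℕ} (x : Fin d → ℤ) : ℝ := 1 + ∑ i, ((x i : ℝ)) ^ 2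

open Finset

theorem ENNReal.prod_tsum {ι κ : Type*} [Fintype ι] (f : ι → κ → ℝ≥0∞) :
    ∏ i, ∑' j, f i j = ∑' x : ι → κ, ∏ i, f i (x i) := by
  revert f
  refine Fintype.induction_empty_option (P := fun ι _ => ∀ f : ι → κ → ℝ≥0∞,
    ∏ i, ∑' j, f i j = ∑' x : ι → κ, ∏ i, f i (x i)) ?_ ?_ ?_ ι
  · intro α β _ e ih f
    let := Fintype.ofEquiv β e.symm
    rw [← e.prod_comp, ih, ← (e.arrowCongr (Equiv.refl κ)).symm.tsum_eq]
    congr! with x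
    exact e.prod_comp fun i => f i (x i)
  · simp [tsum_fintype]
  · intro α _ ih f
    rw [Fintype.prod_option, ih, ← Equiv.piOptionEquivProd.symm.tsum_eq, ENNReal.tsum_prod',
      ← ENNReal.tsum_mul_right]
    simp [Fintype.prod_option, ENNReal.tsum_mul_left]

theorem ENNReal.tsum_sum_eq_prod_erase_le_pow {ι V : Type*} [Fintype ι] [DecidableEq ι]
    [AddCommGroup V] (F : V → ℝ≥0∞) (k : V) (j : ι) :
    ∑' l : {l : ι → V // ∑ i, l i = k}, ∏ i ∈ univ.erase j, F (l.1 i) ≤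
      (∑' v, F v) ^ (Fintype.card ι - 1) := by
  have restrict_injective : Function.Injective
      fun (l : {l : ι → V // ∑ i, l i = k}) (i : {i // i ≠ j}) => l.1 i := by
    intro l l' hll'
    have eq_sub (l : {l : ι → V // ∑ i, l i = k}) : l.1 j = k - ∑ i ∈ univ.erase j, l.1 i :=
      eq_sub_of_add_eq ((add_sum_erase _ _ (mem_univ j)).trans l.2)
    ext1; funext i
    by_cases hi : i = j
    · subst hi
      rw [eq_sub l, eq_sub l']
      exact congrArg (k - ·) (sum_congr rfl fun i hi => congrFun hll' ⟨i, ne_of_mem_erase hi⟩)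
    · exact congrFun hll' ⟨i, hi⟩
  calc ∑' l : {l : ι → V // ∑ i, l i = k}, ∏ i ∈ univ.erase j, F (l.1 i)
      = ∑' l : {l : ι → V // ∑ i, l i = k}, ∏ i : {i // i ≠ j}, F (l.1 i) :=
        tsum_congr fun l => prod_subtype _ (by simp) (fun i => F (l.1 i))
    _ ≤ ∑' x : {i // i ≠ j} → V, ∏ i, F (x i) :=
        ENNReal.tsum_comp_le_tsum_of_injective restrict_injective _
    _ = (∑' v, F v) ^ (Fintype.card ι - 1) := by
        rw [← ENNReal.prod_tsum, prod_const, card_univ, Fintype.card_subtype_compl,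
          Fintype.card_subtype_eq]

lemma rpow_div_prod_rpow_le {ι : Type*} [Fintype ι] [DecidableEq ι] {a : ι → ℝ} {j : ι}
    (ha : ∀ i, 0 < a i) (hj : ∀ i, a i ≤ a j) (h1 : 1 ≤ a j) {α β γ : ℝ} (hαβ : α ≤ β)
    (hγ : γ + ((Fintype.card ι : ℝ) - 1) * (β - α) ≤ α) :
    a j ^ γ / ∏ i, a i ^ α ≤ ∏ i ∈ univ.erase j, a i ^ (-β) := by
  have card_erase : ((univ.erase j).card : ℝ) = Fintype.card ι - 1 := by
    rw [card_erase_of_mem (mem_univ j), card_univ, Nat.cast_pred (Fintype.card_pos_iff.mpr ⟨j⟩)]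
  rw [div_le_iff₀ (prod_pos fun i _ => Real.rpow_pos_of_pos (ha i) α),
    ← mul_prod_erase univ _ (mem_univ j), mul_left_comm, ← prod_mul_distrib]
  calc a j ^ γ ≤ a j ^ (α + (Fintype.card ι - 1) * (α - β)) :=
        Real.rpow_le_rpow_of_exponent_le h1 (by linarith)
    _ = a j ^ α * ∏ _i ∈ univ.erase j, a j ^ (α - β) := by
        rw [prod_const, ← Real.rpow_mul_natCast (ha j).le, card_erase, Real.rpow_add (ha j),
          mul_comm (α - β)]
    _ ≤ a j ^ α * ∏ i ∈ univ.erase j, a i ^ (-β) * a i ^ α := by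
        gcongr with i
        rw [← Real.rpow_add (ha i), neg_add_eq_sub]
        exact Real.rpow_le_rpow_of_nonpos (ha i) (hj i) (by linarith)

lemma one_le_lam {d : ℕ} (x : Fin d → ℤ) : 1 ≤ lam x :=
  le_add_of_nonneg_right (sum_nonneg fun _ _ => sq_nonneg _)

lemma lam_pos {d : ℕ} (x : Fin d → ℤ) : 0 < lam x := zero_lt_one.trans_le (one_le_lam x)

lemma lam_sum_le_card_sq_mul {ι : Type*} [Fintype ι] {d : ℕ} (l : ι → Fin d → ℤ) {j : ι}
    (hj : ∀ i, lam (l i) ≤ lam (l j)) :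
    lam (∑ i, l i) ≤ (Fintype.card ι : ℝ) ^ 2 * lam (l j) := by
  set n : ℝ := (Fintype.card ι : ℝ)
  have hn : 1 ≤ n := Nat.one_le_cast.mpr (Fintype.card_pos_iff.mpr ⟨j⟩)
  have coord_sq_le (c : Fin d) : ((∑ i, l i) c : ℝ) ^ 2 ≤ n * ∑ i, (l i c : ℝ) ^ 2 := by
    simpa [Finset.sum_apply] using sq_sum_le_card_mul_sum_sq (s := univ) (f := fun i => (l i c : ℝ))
  have sum_sq_le : ∑ i, ∑ c, (l i c : ℝ) ^ 2 ≤ n * (lam (l j) - 1) := by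
    calc ∑ i, ∑ c, (l i c : ℝ) ^ 2 = ∑ i, (lam (l i) - 1) := by simp [lam]
      _ ≤ ∑ _i : ι, (lam (l j) - 1) := sum_le_sum fun i _ => by linarith [hj i]
      _ = n * (lam (l j) - 1) := by simp [n, mul_sub]
  calc lam (∑ i, l i) ≤ 1 + ∑ c, n * ∑ i, (l i c : ℝ) ^ 2 :=
        add_le_add_right (sum_le_sum fun c _ => coord_sq_le c) 1
    _ = 1 + n * ∑ i, ∑ c, (l i c : ℝ) ^ 2 := by rw [← mul_sum, sum_comm]
    _ ≤ n ^ 2 * lam (l j) := by nlinarith [one_le_lam (l j)]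

lemma summable_one_add_sq_rpow_neg {t : ℝ} (ht : 1 / 2 < t) :
    Summable fun m : ℤ => (1 + (m : ℝ) ^ 2) ^ (-t) := by
  refine (Real.summable_abs_int_rpow (b := 2 * t) (by linarith)).of_norm_bounded_eventually ?_
  filter_upwards [(Set.finite_singleton (0 : ℤ)).compl_mem_cofinite] with m hm
  have hm : (m : ℝ) ≠ 0 := by simpa using hm
  rw [Real.norm_of_nonneg (by positivity), show -(2 * t) = 2 * -t by ring,
    Real.rpow_mul (abs_nonneg _), Real.rpow_two, sq_abs]
  exact Real.rpow_le_rpow_of_nonpos (by positivity) (by linarith) (by linarith)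

lemma tsum_lam_rpow_neg_lt_top {d : ℕ} {s : ℝ} (hs : d / 2 < s) :
    ∑' x : Fin d → ℤ, ENNReal.ofReal (lam x ^ (-s)) < ⊤ := by
  have hs₀ : 0 ≤ s := le_trans (by positivity) hs.le
  have lam_rpow_le (x : Fin d → ℤ) :
      lam x ^ (-s) ≤ ∏ i, (1 + (x i : ℝ) ^ 2) ^ (-(s / d)) := by
    calc lam x ^ (-s) ≤ lam x ^ (-(s / d) * d) := by
          refine Real.rpow_le_rpow_of_exponent_le (one_le_lam x) ?_
          -- for `d = 0` the right-hand exponent is `0`, as `s / 0 = 0`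
          rcases eq_or_ne (d : ℝ) 0 with hd | hd
          · simp only [hd] at hs ⊢; linarith
          · rw [neg_mul, div_mul_cancel₀ s hd]
      _ = ∏ i : Fin d, lam x ^ (-(s / d)) := by
          rw [prod_const, card_univ, Fintype.card_fin, Real.rpow_mul_natCast (lam_pos x).le]
      _ ≤ ∏ i, (1 + (x i : ℝ) ^ 2) ^ (-(s / d)) := by
          refine prod_le_prod (fun i _ => (Real.rpow_pos_of_pos (lam_pos x) _).le) fun i _ => ?_
          refine Real.rpow_le_rpow_of_nonpos (by positivity) ?_
            (by simp only [neg_nonpos]; positivity)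
          exact add_le_add_right (single_le_sum (fun j _ => sq_nonneg (x j : ℝ)) (mem_univ i)) 1
  calc ∑' x : Fin d → ℤ, ENNReal.ofReal (lam x ^ (-s))
      ≤ ∑' x : Fin d → ℤ, ∏ i, ENNReal.ofReal ((1 + (x i : ℝ) ^ 2) ^ (-(s / d))) := by
        refine ENNReal.tsum_le_tsum fun x => ?_
        rw [← ENNReal.ofReal_prod_of_nonneg fun i _ => by positivity]
        exact ENNReal.ofReal_le_ofReal (lam_rpow_le x)
    _ = ∏ i : Fin d, ∑' m : ℤ, ENNReal.ofReal ((1 + (m : ℝ) ^ 2) ^ (-(s / d))) :=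
        (ENNReal.prod_tsum fun (_ : Fin d) (m : ℤ) =>
          ENNReal.ofReal ((1 + (m : ℝ) ^ 2) ^ (-(s / d)))).symm
    _ < ⊤ := by
        refine ENNReal.prod_lt_top fun i _ => ?_
        have hd : (0 : ℝ) < d := Nat.cast_pos.mpr i.pos
        rw [← ENNReal.ofReal_tsum_of_nonneg (fun m => by positivity)
          (summable_one_add_sq_rpow_neg (by rw [lt_div_iff₀ hd]; linarith))]
        exact ENNReal.ofReal_lt_top

lemma ofReal_lam_sum_rpow_div_prod_le {ι : Type*} [Fintype ι] [DecidableEq ι] [Nonempty ι]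
    {d : ℕ} (l : ι → Fin d → ℤ) {α β γ : ℝ} (hγ₀ : 0 ≤ γ) (hαβ : α ≤ β)
    (hγ : γ + ((Fintype.card ι : ℝ) - 1) * (β - α) ≤ α) :
    ENNReal.ofReal (lam (∑ i, l i) ^ γ / ∏ i, lam (l i) ^ α) ≤
      ENNReal.ofReal (((Fintype.card ι : ℝ) ^ 2) ^ γ) *
        ∑ j, ∏ i ∈ univ.erase j, ENNReal.ofReal (lam (l i) ^ (-β)) := by
  obtain ⟨j, hj⟩ := Finite.exists_max fun i => lam (l i)
  have real_bound : lam (∑ i, l i) ^ γ / ∏ i, lam (l i) ^ α ≤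
      ((Fintype.card ι : ℝ) ^ 2) ^ γ * ∏ i ∈ univ.erase j, lam (l i) ^ (-β) := by
    calc lam (∑ i, l i) ^ γ / ∏ i, lam (l i) ^ α
        ≤ ((Fintype.card ι : ℝ) ^ 2 * lam (l j)) ^ γ / ∏ i, lam (l i) ^ α :=
          div_le_div_of_nonneg_right
            (Real.rpow_le_rpow (lam_pos _).le (lam_sum_le_card_sq_mul l hj) hγ₀)
            (prod_nonneg fun i _ => (Real.rpow_pos_of_pos (lam_pos _) _).le)
      _ = ((Fintype.card ι : ℝ) ^ 2) ^ γ * (lam (l j) ^ γ / ∏ i, lam (l i) ^ α) := by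
          rw [Real.mul_rpow (by positivity) (lam_pos _).le, mul_div_assoc]
      _ ≤ ((Fintype.card ι : ℝ) ^ 2) ^ γ * ∏ i ∈ univ.erase j, lam (l i) ^ (-β) := by
          gcongr
          exact rpow_div_prod_rpow_le (fun i => lam_pos _) hj (one_le_lam _) hαβ hγ
  calc ENNReal.ofReal (lam (∑ i, l i) ^ γ / ∏ i, lam (l i) ^ α)
      ≤ ENNReal.ofReal (((Fintype.card ι : ℝ) ^ 2) ^ γ) *
          ∏ i ∈ univ.erase j, ENNReal.ofReal (lam (l i) ^ (-β)) := by
        rw [← ENNReal.ofReal_prod_of_nonneg fun i _ => (Real.rpow_pos_of_pos (lam_pos _) _).le,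
          ← ENNReal.ofReal_mul (by positivity)]
        exact ENNReal.ofReal_le_ofReal real_bound
    _ ≤ _ := by
        gcongr
        exact single_le_sum (f := fun j => ∏ i ∈ univ.erase j, ENNReal.ofReal (lam (l i) ^ (-β)))
          (fun _ _ => zero_le) (mem_univ j)

theorem iSup_tsum_lam_rpow_div_prod_lt_top {n d : ℕ} (hn : n ≠ 0) {α γ : ℝ} (hγ₀ : 0 ≤ γ)
    (hα : α ≤ d / 2) (hγ : γ < n * α - (n - 1) * (d / 2)) :
    (⨆ k : Fin d → ℤ, ∑' l : {l : Fin n → Fin d → ℤ // ∑ j, l j = k},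
      ENNReal.ofReal (lam k ^ γ / ∏ j, lam (l.1 j) ^ α)) < ⊤ := by
  have : NeZero n := ⟨hn⟩
  have hn₀ : (0 : ℝ) < n := Nat.cast_pos.mpr (Nat.pos_of_ne_zero hn)
  set ε := (n * α - (n - 1) * (d / 2) - γ) / n
  have hε : 0 < ε := div_pos (by linarith) hn₀
  have hnε : n * ε = n * α - (n - 1) * (d / 2) - γ := mul_div_cancel₀ _ hn₀.ne'
  set β : ℝ := d / 2 + ε with hβ
  have hexp : γ + ((Fintype.card (Fin n) : ℝ) - 1) * (β - α) ≤ α := by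
    rw [Fintype.card_fin, hβ]; linarith
  set Z := ∑' x : Fin d → ℤ, ENNReal.ofReal (lam x ^ (-β))
  have hZ : Z < ⊤ := tsum_lam_rpow_neg_lt_top (by linarith [hβ])
  set C := ENNReal.ofReal (((n : ℝ) ^ 2) ^ γ)
  refine lt_of_le_of_lt (iSup_le fun k => ?_) (ENNReal.mul_lt_top ENNReal.ofReal_lt_top
    (ENNReal.sum_lt_top.mpr fun j _ => ENNReal.pow_lt_top hZ) : C * ∑ _j : Fin n, Z ^ (n - 1) < ⊤)
  calc ∑' l : {l : Fin n → Fin d → ℤ // ∑ j, l j = k},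
        ENNReal.ofReal (lam k ^ γ / ∏ j, lam (l.1 j) ^ α)
      ≤ ∑' l : {l : Fin n → Fin d → ℤ // ∑ j, l j = k},
          C * ∑ j, ∏ i ∈ univ.erase j, ENNReal.ofReal (lam (l.1 i) ^ (-β)) :=
        ENNReal.tsum_le_tsum fun l => by
          simpa only [l.2, Fintype.card_fin] using
            ofReal_lam_sum_rpow_div_prod_le l.1 hγ₀ (by linarith [hβ]) hexp
    _ = C * ∑ j, ∑' l : {l : Fin n → Fin d → ℤ // ∑ j, l j = k},
          ∏ i ∈ univ.erase j, ENNReal.ofReal (lam (l.1 i) ^ (-β)) := by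
        rw [ENNReal.tsum_mul_left, Summable.tsum_finsetSum fun j _ => ENNReal.summable]
    _ ≤ C * ∑ _j : Fin n, Z ^ (n - 1) := by
        gcongr with j
        simpa only [Fintype.card_fin] using ENNReal.tsum_sum_eq_prod_erase_le_pow _ k j

lemma wick_exponent_bounds {n d : ℕ} (hn : 2 ≤ n) (hd : 2 ≤ d)
    (h : ((n : ℝ) + 1) / ((n : ℝ) - 1) > (d : ℝ) / 2) :
    1 + min ((d : ℝ) - 2) 1 / n ≤ d / 2 ∧ 0 < d / 2 + min ((d : ℝ) - 2) 1 + n * (1 - d / 2) := by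
  have hn₂ : (2 : ℝ) ≤ n := by exact_mod_cast hn
  rcases hd.eq_or_lt with rfl | hd₃
  · norm_num
  · have hd₃ : (3 : ℝ) ≤ d := by exact_mod_cast hd₃
    have hn_inv : 1 / (n : ℝ) ≤ 1 / 2 := one_div_le_one_div_of_le two_pos hn₂
    rw [gt_iff_lt, lt_div_iff₀ (by linarith)] at h
    rw [min_eq_right (by linarith)]
    constructor <;> nlinarith

/-- Summability for convolutional Wick powers: if `n, d ≥ 2` and `(n+1)/(n−1) > d/2`,
then for every `γ < d/2 + min(d−2, 1) + n(1 − d/2)` one has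
`sup_{k ∈ ℤ^d} Σ_{l₁+⋯+l_n = k} (λ_k)^γ /
    ((λ_{l₁})^{1+min(d−2,1)/n}⋯(λ_{l_n})^{1+min(d−2,1)/n}) < ∞`. -/
theorem convolutional_wick_power_summability (n d : ℕ) (hn : 2 ≤ n) (hd : 2 ≤ d)
    (h : ((n : ℝ) + 1) / ((n : ℝ) - 1) > (d : ℝ) / 2) (γ : ℝ)
    (hγ : γ < (d : ℝ) / 2 + min ((d : ℝ) - 2) 1 + (n : ℝ) * (1 - (d : ℝ) / 2)) :
    (⨆ k : Fin d → ℤ,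
        ∑' l : {l : Fin n → (Fin d → ℤ) // ∑ j, l j = k},
          ENNReal.ofReal ((lam k) ^ γ /
            ∏ j, (lam (l.1 j)) ^ (1 + min ((d : ℝ) - 2) 1 / (n : ℝ)))) < ⊤ := by
  set m := min ((d : ℝ) - 2) 1
  have threshold_eq : n * (1 + m / n) - (n - 1) * (d / 2) = d / 2 + m + n * (1 - d / 2) := by
    field_simp; ring
  obtain ⟨hα, threshold_pos⟩ := wick_exponent_bounds hn hd h
  calc _ ≤ ⨆ k : Fin d → ℤ, ∑' l : {l : Fin n → (Fin d → ℤ) // ∑ j, l j = k},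
          ENNReal.ofReal ((lam k) ^ max γ 0 / ∏ j, (lam (l.1 j)) ^ (1 + m / n)) := by
        gcongr with k l
        · exact prod_nonneg fun j _ => (Real.rpow_pos_of_pos (lam_pos _) _).le
        · exact one_le_lam k
        · exact le_max_left γ 0
    _ < ⊤ := iSup_tsum_lam_rpow_div_prod_lt_top (by omega) (le_max_right γ 0) hα
        (max_lt (threshold_eq ▸ hγ) (threshold_eq ▸ threshold_pos))
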